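/- Let D = diag(d₁,…,d_n) be a real diagonal matrix and X : [0,1] → H(n) a smooth curve with X(0) = 0, X(1) = D, and trace-norm length equal to ‖D‖₁. Then for each index j with d_j = 0, the diagonal entry satisfies X_{jj}(t) = 0 for all t ∈ [0,1], and for each j with d_j > 0 (resp. d_j < 0) the map t ↦ X_{jj}(t) is non-decreasing (resp. non-increasing). -/

import Mathlib

open scoped ComplexOrder

/-- The positive semidefinite square root of a positive semidefinite matrix
(the definition `Matrix.PosSemidef.sqrt` of the older Mathlib). -/
noncomputable def Matrix.PosSemidef.sqrt {n 𝕜 : Type*} [Fintype n] [DecidableEq n] [RCLike 𝕜]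
    {A : Matrix n n 𝕜} (hA : A.PosSemidef) : Matrix n n 𝕜 :=
  hA.1.eigenvectorUnitary.1 * Matrix.diagonal ((↑) ∘ (√·) ∘ hA.1.eigenvalues) *
  (star hA.1.eigenvectorUnitary : Matrix n n 𝕜)

/-- The trace norm (Schatten 1-norm) of a complex matrix: `‖A‖₁ = tr |A|`. -/
noncomputable def traceNorm {m p : Type*} [Fintype m] [Fintype p] [DecidableEq p]
    (A : Matrix m p ℂ) : ℝ :=
  ((Matrix.PosSemidef.sqrt (Matrix.posSemidef_conjTranspose_mul_self A)).trace).re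

namespace TN
open Matrix

variable {n : Type*} [Fintype n] [DecidableEq n]

open scoped MatrixOrder in
lemma eq_sqrt_of_sq_eq' {A B : Matrix n n ℂ} (hB : B.PosSemidef) (hA : A.PosSemidef)
    (h : B ^ 2 = A) : B = Matrix.PosSemidef.sqrt hA := by
  have e : Matrix.PosSemidef.sqrt hA = CFC.sqrt A := by
    rw [CFC.sqrt_eq_real_sqrt A hA.nonneg, cfcₙ_eq_cfc (hf0 := Real.sqrt_zero), hA.1.cfc_eq]; rfl
  rw [e]; exact (CFC.sqrt_unique (by rw [← sq]; exact h) hB.nonneg).symm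

lemma conj_pow (U D : Matrix n n ℂ) (hU : U * star U = 1) (hU' : star U * U = 1) (i : ℕ) :
    (U * D * star U) ^ i = U * D ^ i * star U := by
  have h2 : ∀ x : Matrix n n ℂ, star U * (U * x) = x := fun x => by
    rw [← Matrix.mul_assoc, hU', Matrix.one_mul]
  induction i with
  | zero => simpa using hU.symm
  | succ k ih =>
      rw [pow_succ, ih, pow_succ]
      simp only [Matrix.mul_assoc, h2]

lemma sqrt_herm {A : Matrix n n ℂ} (hA : A.IsHermitian) :
    Matrix.PosSemidef.sqrt (Matrix.posSemidef_conjTranspose_mul_self A)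
      = (hA.eigenvectorUnitary : Matrix n n ℂ)
        * diagonal (fun i => ((|hA.eigenvalues i| : ℝ) : ℂ))
        * star (hA.eigenvectorUnitary : Matrix n n ℂ) := by
  set U := (hA.eigenvectorUnitary : Matrix n n ℂ) with hUdef
  have hU : U * star U = 1 := mem_unitaryGroup_iff.mp hA.eigenvectorUnitary.2
  have hU' : star U * U = 1 := mem_unitaryGroup_iff'.mp hA.eigenvectorUnitary.2
  have h2 : ∀ x : Matrix n n ℂ, star U * (U * x) = x := fun x => by
    rw [← Matrix.mul_assoc, hU', Matrix.one_mul]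
  set S := U * diagonal (fun i => ((|hA.eigenvalues i| : ℝ) : ℂ)) * star U with hSdef
  have hSps : S.PosSemidef := by
    apply PosSemidef.mul_mul_conjTranspose_same
    exact posSemidef_diagonal_iff.mpr fun i => by
      rw [Complex.zero_le_real]; positivity
  have hsq : S ^ 2 = Aᴴ * A := by
    rw [hA.eq]
    conv_rhs => rw [hA.spectral_theorem, Unitary.conjStarAlgAut_apply, ← hUdef]
    rw [hSdef, conj_pow U _ hU hU', diagonal_pow]
    simp only [Matrix.mul_assoc, h2]
    rw [← Matrix.mul_assoc (diagonal _), diagonal_mul_diagonal]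
    have hfe : ((fun i => ((|hA.eigenvalues i| : ℝ) : ℂ)) ^ 2)
        = fun i => (RCLike.ofReal ∘ hA.eigenvalues) i * (RCLike.ofReal ∘ hA.eigenvalues) i := by
      funext i
      simp only [Pi.pow_apply, Function.comp]
      rw [← Complex.ofReal_pow, sq_abs, sq, Complex.ofReal_mul]
      rfl
    rw [hfe]
  exact (eq_sqrt_of_sq_eq' hSps (posSemidef_conjTranspose_mul_self _) hsq).symm

lemma traceNorm_herm {A : Matrix n n ℂ} (hA : A.IsHermitian) :
    traceNorm A = ∑ i, |hA.eigenvalues i| := by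
  have hU' : star (hA.eigenvectorUnitary : Matrix n n ℂ) * (hA.eigenvectorUnitary : Matrix n n ℂ) = 1 :=
    mem_unitaryGroup_iff'.mp hA.eigenvectorUnitary.2
  rw [traceNorm, sqrt_herm hA, Matrix.trace_mul_cycle, hU', Matrix.one_mul, trace_diagonal]
  push_cast
  simp

lemma diag_entry (A : Matrix n n ℂ) (hA : A.IsHermitian) (j : n) :
    A j j = ∑ k, (hA.eigenvalues k : ℂ) *
      ((hA.eigenvectorUnitary : Matrix n n ℂ) j k
        * star ((hA.eigenvectorUnitary : Matrix n n ℂ) j k)) := by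
  conv_lhs => rw [hA.spectral_theorem, Unitary.conjStarAlgAut_apply]
  rw [Matrix.mul_apply]
  congr 1
  funext k
  rw [Matrix.mul_diagonal, Matrix.star_apply]
  simp only [Function.comp]
  have : (RCLike.ofReal (hA.eigenvalues k) : ℂ) = ((hA.eigenvalues k : ℝ) : ℂ) := rfl
  rw [this]
  ring

lemma sum_abs_diag_le {A : Matrix n n ℂ} (hA : A.IsHermitian) :
    ∑ j, |(A j j).re| ≤ traceNorm A := by
  rw [traceNorm_herm hA]
  set U := (hA.eigenvectorUnitary : Matrix n n ℂ) with hUdef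
  have hcol : ∀ k, ∑ j, Complex.normSq (U j k) = 1 := by
    intro k
    have hU' : star U * U = 1 := mem_unitaryGroup_iff'.mp hA.eigenvectorUnitary.2
    have := congrArg (fun M => M k k) hU'
    simp only [Matrix.mul_apply, Matrix.one_apply_eq, Matrix.conjTranspose_apply] at this
    have h2 := congrArg Complex.re this
    rw [Complex.re_sum] at h2
    simpa [Complex.mul_re, Complex.normSq_apply] using h2
  calc ∑ j, |(A j j).re|
      ≤ ∑ j, ∑ k, |hA.eigenvalues k| * Complex.normSq (U j k) := by
        apply Finset.sum_le_sum
        intro j _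
        rw [diag_entry A hA j]
        rw [Complex.re_sum]
        refine (Finset.abs_sum_le_sum_abs _ _).trans ?_
        apply Finset.sum_le_sum
        intro k _
        rw [Complex.star_def, Complex.mul_conj, ← Complex.ofReal_mul, Complex.ofReal_re, abs_mul,
          abs_of_nonneg (Complex.normSq_nonneg _)]
    _ = ∑ k, |hA.eigenvalues k| * (∑ j, Complex.normSq (U j k)) := by
        rw [Finset.sum_comm]
        simp [Finset.mul_sum]
    _ = ∑ k, |hA.eigenvalues k| := by simp [hcol]

lemma herm_sq {A : Matrix n n ℂ} (hA : A.IsHermitian) :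
    Aᴴ * A = (hA.eigenvectorUnitary : Matrix n n ℂ)
      * diagonal (fun k => ((hA.eigenvalues k ^ 2 : ℝ) : ℂ))
      * star (hA.eigenvectorUnitary : Matrix n n ℂ) := by
  set U := (hA.eigenvectorUnitary : Matrix n n ℂ) with hUdef
  have hU' : star U * U = 1 := mem_unitaryGroup_iff'.mp hA.eigenvectorUnitary.2
  have h2 : ∀ x : Matrix n n ℂ, star U * (U * x) = x := fun x => by
    rw [← Matrix.mul_assoc, hU', Matrix.one_mul]
  rw [hA.eq]
  conv_lhs => rw [hA.spectral_theorem, Unitary.conjStarAlgAut_apply, ← hUdef]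
  simp only [Matrix.mul_assoc, h2]
  rw [← Matrix.mul_assoc (diagonal _), diagonal_mul_diagonal]
  have hfe : (fun k => (RCLike.ofReal ∘ hA.eigenvalues) k * (RCLike.ofReal ∘ hA.eigenvalues) k)
      = fun k => ((hA.eigenvalues k ^ 2 : ℝ) : ℂ) := by
    funext k
    simp only [Function.comp]
    have : (RCLike.ofReal (hA.eigenvalues k) : ℂ) = ((hA.eigenvalues k : ℝ) : ℂ) := rfl
    rw [this, ← Complex.ofReal_mul, sq]
  rw [hfe]

set_option maxHeartbeats 1000000 in
lemma trace_aeval {A : Matrix n n ℂ} (hA : A.IsHermitian) (p : Polynomial ℝ) :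
    ((Polynomial.aeval (Aᴴ * A) p).trace).re = ∑ k, p.eval (hA.eigenvalues k ^ 2) := by
  set U := (hA.eigenvectorUnitary : Matrix n n ℂ) with hUdef
  have hU : U * star U = 1 := mem_unitaryGroup_iff.mp hA.eigenvectorUnitary.2
  have hU' : star U * U = 1 := mem_unitaryGroup_iff'.mp hA.eigenvectorUnitary.2
  have key : ∀ i : ℕ, ((Aᴴ * A) ^ i).trace = ∑ k, ((hA.eigenvalues k ^ 2 : ℝ) : ℂ) ^ i := by
    intro i
    rw [herm_sq hA, ← hUdef, conj_pow U _ hU hU', Matrix.trace_mul_cycle, hU',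
      Matrix.one_mul, diagonal_pow, trace_diagonal]
    rfl
  rw [Polynomial.aeval_eq_sum_range, Matrix.trace_sum]
  simp only [Matrix.trace_smul, key]
  simp only [Finset.smul_sum, Complex.real_smul, ← Complex.ofReal_pow, ← Complex.ofReal_mul,
    Complex.re_sum, Complex.ofReal_re]
  rw [Finset.sum_comm]
  exact Finset.sum_congr rfl fun k _ => (Polynomial.eval_eq_sum_range (p := p) (hA.eigenvalues k ^ 2)).symm

lemma traceNorm_diagonal (d : n → ℝ) :
    traceNorm (diagonal fun j => (d j : ℂ)) = ∑ j, |d j| := by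
  have hB : (diagonal fun j => ((|d j| : ℝ) : ℂ)).PosSemidef :=
    posSemidef_diagonal_iff.mpr fun i => by rw [Complex.zero_le_real]; positivity
  have hsq : (diagonal fun j => ((|d j| : ℝ) : ℂ)) ^ 2
      = (diagonal fun j => (d j : ℂ))ᴴ * (diagonal fun j => (d j : ℂ)) := by
    rw [diagonal_conjTranspose, diagonal_mul_diagonal, diagonal_pow]
    have hfe : ((fun j => ((|d j| : ℝ) : ℂ)) ^ 2)
        = star (fun j => ((d j : ℝ) : ℂ)) * fun j => ((d j : ℝ) : ℂ) := by
      funext j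
      simp only [Pi.pow_apply, Pi.mul_apply, Pi.star_apply, Complex.star_def, Complex.conj_ofReal]
      rw [← Complex.ofReal_pow, sq_abs, ← Complex.ofReal_mul, sq]
    rw [hfe]
    rfl
  rw [traceNorm, ← eq_sqrt_of_sq_eq' hB (posSemidef_conjTranspose_mul_self _) hsq, trace_diagonal]
  rw [Complex.re_sum]
  simp

end TN

open Matrix TN MeasureTheory in
set_option maxHeartbeats 1000000 in
/-- If `X : [0,1] → H(n)` is a smooth minimal curve (for the trace norm) joining `0` to
a real diagonal matrix `D = diag(d₁, …, d_n)`, then for each `j`: if `d_j = 0` the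
diagonal entry `X_{jj}(t)` vanishes on `[0,1]`; if `d_j > 0` it is non-decreasing on
`[0,1]`; and if `d_j < 0` it is non-increasing on `[0,1]`. -/
theorem diagonal_entries_monotone_of_minimal {n : ℕ}
    (X X' : ℝ → Matrix (Fin n) (Fin n) ℂ) (d : Fin n → ℝ)
    (hsmooth : ∀ i j, ContDiff ℝ (⊤ : ℕ∞) fun t => X t i j)
    (hderiv : ∀ t i j, HasDerivAt (fun s => X s i j) (X' t i j) t)
    (hherm : ∀ t, (X t).IsHermitian)
    (h0 : X 0 = 0) (h1 : X 1 = Matrix.diagonal fun j => (d j : ℂ))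
    (hmin : (∫ t in (0:ℝ)..1, traceNorm (X' t)) = traceNorm (X 1)) :
    ∀ j : Fin n,
      (d j = 0 → ∀ t ∈ Set.Icc (0:ℝ) 1, X t j j = 0) ∧
      (0 < d j → MonotoneOn (fun t => (X t j j).re) (Set.Icc (0:ℝ) 1)) ∧
      (d j < 0 → AntitoneOn (fun t => (X t j j).re) (Set.Icc (0:ℝ) 1)) := by
  classical
  -- continuity of X'
  have hX'cont : ∀ i j, Continuous fun t => X' t i j := by
    intro i j
    have h := (hsmooth i j).continuous_deriv (by simp)
    have he : (deriv fun s => X s i j) = fun t => X' t i j :=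
      funext fun t => (hderiv t i j).deriv
    rwa [he] at h
  have hX'm : Continuous fun t => X' t := continuous_matrix fun i j => hX'cont i j
  -- X' t is Hermitian
  have hX'herm : ∀ t, (X' t).IsHermitian := by
    intro t
    ext i j
    rw [Matrix.conjTranspose_apply]
    have hfun : (fun s => X s i j) = fun s => star (X s j i) :=
      funext fun s => ((hherm s).apply i j).symm
    have h1' : HasDerivAt (fun s => X s i j) (star (X' t j i)) t := by
      rw [hfun]; exact (hderiv t j i).star
    exact h1'.unique (hderiv t i j)
  -- diagonal derivative functions
  set f : Fin n → ℝ → ℝ := fun j t => (X' t j j).re with hfdef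
  have hfd : ∀ (j) (t : ℝ), HasDerivAt (fun s => (X s j j).re) (f j t) t := fun j t =>
    Complex.reCLM.hasFDerivAt.comp_hasDerivAt t (hderiv t j j)
  have hfcont : ∀ j, Continuous (f j) := fun j => Complex.continuous_re.comp (hX'cont j j)
  have hFTC : ∀ (j) (a b : ℝ), (∫ t in a..b, f j t) = (X b j j).re - (X a j j).re := fun j a b =>
    intervalIntegral.integral_eq_sub_of_hasDerivAt (fun t _ => hfd j t)
      ((hfcont j).intervalIntegrable a b)
  have hd : ∀ j, (∫ t in (0:ℝ)..1, f j t) = d j := by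
    intro j
    rw [hFTC, h0, h1]
    simp
  -- continuity of traceNorm (X' t) on [0,1]
  set F : ℝ → ℝ := fun t => traceNorm (X' t) with hFdef
  set r : ℝ → ℝ := fun t => (((X' t)ᴴ * X' t).trace).re with hrdef
  have hrcont : Continuous r :=
    Complex.continuous_re.comp (hX'm.matrix_conjTranspose.matrix_mul hX'm).matrix_trace
  have hrval : ∀ t, r t = ∑ k, (hX'herm t).eigenvalues k ^ 2 := by
    intro t
    have h := trace_aeval (hX'herm t) Polynomial.X
    simpa using h
  obtain ⟨R, hR⟩ : ∃ R, ∀ t ∈ Set.Icc (0:ℝ) 1, r t ≤ R := by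
    obtain ⟨R, hR⟩ := (isCompact_Icc.image hrcont).bddAbove
    exact ⟨R, fun t ht => hR (Set.mem_image_of_mem _ ht)⟩
  have hR0 : (0:ℝ) ≤ R := by
    refine le_trans ?_ (hR 0 ⟨le_refl 0, zero_le_one⟩)
    rw [hrval]
    positivity
  have hlmem : ∀ t ∈ Set.Icc (0:ℝ) 1, ∀ k, (hX'herm t).eigenvalues k ^ 2 ∈ Set.Icc 0 R := by
    intro t ht k
    refine ⟨sq_nonneg _, le_trans ?_ (hR t ht)⟩
    rw [hrval]
    exact Finset.single_le_sum (f := fun i => (hX'herm t).eigenvalues i ^ 2)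
      (fun i _ => sq_nonneg _) (Finset.mem_univ k)
  choose p hp using fun m : ℕ =>
    exists_polynomial_near_of_continuousOn 0 R Real.sqrt Real.continuous_sqrt.continuousOn
      (1/(m+1)) (by positivity)
  set φ : ℕ → ℝ → ℝ := fun m t => ((Polynomial.aeval ((X' t)ᴴ * X' t) (p m)).trace).re with hφdef
  have hBcont : Continuous fun t => (X' t)ᴴ * X' t := hX'm.matrix_conjTranspose.matrix_mul hX'm
  have hφcont : ∀ m, Continuous (φ m) := by
    intro m
    apply Complex.continuous_re.comp
    apply Continuous.matrix_trace
    have : (fun t => Polynomial.aeval ((X' t)ᴴ * X' t) (p m))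
        = fun t => ∑ i ∈ Finset.range ((p m).natDegree + 1),
            (p m).coeff i • ((X' t)ᴴ * X' t) ^ i :=
      funext fun t => Polynomial.aeval_eq_sum_range (p := p m) _
    rw [this]
    exact continuous_finset_sum _ fun i _ =>
      show Continuous fun t => (p m).coeff i • ((X' t)ᴴ * X' t) ^ i from
        (continuous_const_smul ((p m).coeff i)).comp ((continuous_pow i).comp hBcont)
  have hφ_est : ∀ m, ∀ t ∈ Set.Icc (0:ℝ) 1, |φ m t - F t| ≤ n * (1/(m+1)) := by
    intro m t ht
    have hFt : F t = ∑ k, Real.sqrt ((hX'herm t).eigenvalues k ^ 2) := by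
      rw [hFdef]
      simp only [traceNorm_herm (hX'herm t)]
      exact Finset.sum_congr rfl fun k _ => (Real.sqrt_sq_eq_abs _).symm
    have hφt : φ m t = ∑ k, (p m).eval ((hX'herm t).eigenvalues k ^ 2) :=
      trace_aeval (hX'herm t) (p m)
    rw [hFt, hφt, ← Finset.sum_sub_distrib]
    refine (Finset.abs_sum_le_sum_abs _ _).trans ?_
    have : ∀ k : Fin n, |(p m).eval ((hX'herm t).eigenvalues k ^ 2)
        - Real.sqrt ((hX'herm t).eigenvalues k ^ 2)| ≤ 1/(m+1) :=
      fun k => le_of_lt (hp m _ (hlmem t ht k))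
    calc ∑ k, |(p m).eval ((hX'herm t).eigenvalues k ^ 2)
          - Real.sqrt ((hX'herm t).eigenvalues k ^ 2)|
        ≤ ∑ _k : Fin n, (1/(m+1) : ℝ) := Finset.sum_le_sum fun k _ => this k
      _ = n * (1/(m+1)) := by simp [mul_comm]
  have hunif : TendstoUniformlyOn φ F Filter.atTop (Set.Icc (0:ℝ) 1) := by
    rw [Metric.tendstoUniformlyOn_iff]
    intro ε hε
    have htend : Filter.Tendsto (fun m : ℕ => (n:ℝ) * (1/(m+1))) Filter.atTop (nhds 0) := by
      simpa using tendsto_one_div_add_atTop_nhds_zero_nat.const_mul (n:ℝ)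
    filter_upwards [htend.eventually_lt_const hε] with m hm t ht
    rw [Real.dist_eq, abs_sub_comm]
    exact lt_of_le_of_lt (hφ_est m t ht) hm
  have hFcontOn : ContinuousOn F (Set.Icc (0:ℝ) 1) :=
    hunif.continuousOn (Filter.Eventually.of_forall fun m => (hφcont m).continuousOn).frequently
  have hFint : IntervalIntegrable F volume 0 1 := by
    apply ContinuousOn.intervalIntegrable
    rwa [Set.uIcc_of_le zero_le_one]
  -- the key equalities
  set g : ℝ → ℝ := fun t => ∑ j, |f j t| with hgdef
  have hgcont : Continuous g := continuous_finset_sum _ fun j _ => (hfcont j).abs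
  have hgF : ∀ t, g t ≤ F t := fun t => sum_abs_diag_le (hX'herm t)
  have habs_int : ∀ j, IntervalIntegrable (fun t => |f j t|) volume 0 1 :=
    fun j => ((hfcont j).abs).intervalIntegrable 0 1
  have hsum_le : (∑ j, ∫ t in (0:ℝ)..1, |f j t|) ≤ ∑ j, |d j| := by
    calc (∑ j, ∫ t in (0:ℝ)..1, |f j t|) = ∫ t in (0:ℝ)..1, g t :=
          (intervalIntegral.integral_finset_sum fun j _ => habs_int j).symm
      _ ≤ ∫ t in (0:ℝ)..1, F t :=
          intervalIntegral.integral_mono_on zero_le_one (hgcont.intervalIntegrable 0 1) hFint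
            fun t _ => hgF t
      _ = ∑ j, |d j| := by rw [hFdef]; rw [hmin, h1, traceNorm_diagonal]
  have hge : ∀ j, |d j| ≤ ∫ t in (0:ℝ)..1, |f j t| := by
    intro j
    rw [← hd j]
    exact intervalIntegral.abs_integral_le_integral_abs zero_le_one
  have hkey : ∀ j, (∫ t in (0:ℝ)..1, |f j t|) = |d j| := by
    intro j
    by_contra hne
    have hlt : |d j| < ∫ t in (0:ℝ)..1, |f j t| := lt_of_le_of_ne (hge j) (fun h => hne h.symm)
    have : (∑ i, |d i|) < ∑ i, ∫ t in (0:ℝ)..1, |f i t| :=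
      Finset.sum_lt_sum (fun i _ => hge i) ⟨j, Finset.mem_univ j, hlt⟩
    linarith
  -- subinterval bound for nonnegative integrands
  have hsub : ∀ (q : ℝ → ℝ), Continuous q → (∀ t, 0 ≤ q t) → ∀ (a b : ℝ),
      a ∈ Set.Icc (0:ℝ) 1 → b ∈ Set.Icc (0:ℝ) 1 → a ≤ b →
      (∫ t in a..b, q t) ≤ ∫ t in (0:ℝ)..1, q t := by
    intro q hq hq0 a b ha hb hab
    exact intervalIntegral.integral_mono_interval ha.1 hab hb.2
      (MeasureTheory.ae_of_all _ fun t => hq0 t) (hq.intervalIntegrable 0 1)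
  intro j
  refine ⟨?_, ?_, ?_⟩
  · -- d j = 0
    intro hdj t ht
    have hI : (∫ s in (0:ℝ)..1, |f j s|) = 0 := by rw [hkey j, hdj, abs_zero]
    have h2 : |(X t j j).re| ≤ 0 := by
      have e1 : (X t j j).re = ∫ s in (0:ℝ)..t, f j s := by
        have h4 := hFTC j 0 t
        rw [h0] at h4
        simp only [Matrix.zero_apply, Complex.zero_re, sub_zero] at h4
        exact h4.symm
      rw [e1]
      have h3 := hsub _ (hfcont j).abs (fun s => abs_nonneg _) 0 t ⟨le_refl 0, zero_le_one⟩ ht ht.1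
      rw [hI] at h3
      exact (intervalIntegral.abs_integral_le_integral_abs ht.1).trans h3
    have hre : (X t j j).re = 0 := abs_nonpos_iff.mp h2
    have hc : (starRingEnd ℂ) (X t j j) = X t j j := by
      have h6 := (hherm t).apply j j
      simpa [Complex.star_def] using h6
    have h7 := Complex.conj_eq_iff_re.mp hc
    rw [← h7, hre]
    simp
  · -- 0 < d j
    intro hdj a ha b hb hab
    have e2 : (∫ t in (0:ℝ)..1, (|f j t| - f j t)) = 0 := by
      rw [intervalIntegral.integral_sub (habs_int j) ((hfcont j).intervalIntegrable 0 1),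
        hkey j, hd j, abs_of_pos hdj, sub_self]
    have e3 : (∫ t in a..b, (|f j t| - f j t)) ≤ 0 := by
      rw [← e2]
      exact hsub _ ((hfcont j).abs.sub (hfcont j))
        (fun t => sub_nonneg.mpr (le_abs_self _)) a b ha hb hab
    have e4 : (∫ t in a..b, (|f j t| - f j t))
        = (∫ t in a..b, |f j t|) - ∫ t in a..b, f j t :=
      intervalIntegral.integral_sub ((hfcont j).abs.intervalIntegrable a b)
        ((hfcont j).intervalIntegrable a b)
    have e5 : 0 ≤ ∫ t in a..b, |f j t| := intervalIntegral.integral_nonneg hab fun t _ => abs_nonneg _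
    have e6 : 0 ≤ ∫ t in a..b, f j t := by rw [e4] at e3; linarith
    have h5 := hFTC j a b
    show (X a j j).re ≤ (X b j j).re
    linarith
  · -- d j < 0
    intro hdj a ha b hb hab
    have e2 : (∫ t in (0:ℝ)..1, (|f j t| + f j t)) = 0 := by
      rw [intervalIntegral.integral_add (habs_int j) ((hfcont j).intervalIntegrable 0 1),
        hkey j, hd j, abs_of_neg hdj, neg_add_cancel]
    have e3 : (∫ t in a..b, (|f j t| + f j t)) ≤ 0 := by
      rw [← e2]
      exact hsub _ ((hfcont j).abs.add (hfcont j))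
        (fun t => by show 0 ≤ |f j t| + f j t; linarith [(abs_le.mp (le_refl |f j t|)).1]) a b ha hb hab
    have e4 : (∫ t in a..b, (|f j t| + f j t))
        = (∫ t in a..b, |f j t|) + ∫ t in a..b, f j t :=
      intervalIntegral.integral_add ((hfcont j).abs.intervalIntegrable a b)
        ((hfcont j).intervalIntegrable a b)
    have e5 : 0 ≤ ∫ t in a..b, |f j t| := intervalIntegral.integral_nonneg hab fun t _ => abs_nonneg _
    have e6 : (∫ t in a..b, f j t) ≤ 0 := by rw [e4] at e3; linarith
    have h5 := hFTC j a b
    show (X b j j).re ≤ (X a j j).re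
    linarith
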